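/- In a locally Cartesian closed category, every slice category C/X is Cartesian closed. -/

import Mathlib

/-!
The binary product of `A` and `B` in `C/X` is the pullback `A ×_X B`, so the functor `A × -` on
`C/X` is pullback along `A → X` followed by postcomposition with `A → X`. Postcomposition is left
adjoint to pullback, and pullback is a left adjoint by hypothesis, hence `A × -` is a left adjoint,
i.e. `A` is exponentiable.
-/

open CategoryTheory CategoryTheory.Limits

namespace CategoryTheory.Over

open MonoidalCategory CartesianMonoidalCategory

variable {C : Type*} [Category C] {X : C} [CartesianMonoidalCategory (Over X)]

lemma isPullback_fst_left_snd_left (A B : Over X) :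
    IsPullback (fst A B).left (snd A B).left A.hom B.hom :=
  isPullback_of_binaryFan_isLimit _ (tensorProductIsBinaryProduct A B)

noncomputable def pullbackCompMapIsoTensorLeft (A : Over X) [HasPullbacksAlong A.hom] :
    pullback A.hom ⋙ map A.hom ≅ tensorLeft A :=
  NatIso.ofComponents
    (fun B => (isoMk (isPullback_fst_left_snd_left A B).flip.isoPullback (by simp)).symm)
    (fun k => by
      apply CartesianMonoidalCategory.hom_ext <;> ext <;> simp
      exacts [pullback.lift_snd _ _ _, pullback.lift_fst _ _ _])

lemma isLeftAdjoint_tensorLeft (A : Over X) [HasPullbacksAlong A.hom]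
    [(pullback A.hom).IsLeftAdjoint] : (tensorLeft A).IsLeftAdjoint :=
  Functor.isLeftAdjoint_of_iso (pullbackCompMapIsoTensorLeft A)

noncomputable abbrev monoidalClosedOfIsLeftAdjointPullback [HasPullbacks C]
    (h : ∀ {Y : C} (f : Y ⟶ X), (pullback f).IsLeftAdjoint) : MonoidalClosed (Over X) where
  closed A :=
    have := h A.hom
    have := isLeftAdjoint_tensorLeft A
    ⟨_, Adjunction.ofIsLeftAdjoint (tensorLeft A)⟩

end CategoryTheory.Over

/-- Locally Cartesian closed: if C has a terminal object, pullbacks, and every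
pullback functor `Over.pullback f : Over Y ⥤ Over X` has a right adjoint
(i.e. is a left adjoint), then every slice category C/X is Cartesian closed. -/
theorem slice_cartesian_closed {C : Type*} [Category C] [HasTerminal C] [HasPullbacks C]
    (h : ∀ {X Y : C} (f : X ⟶ Y), (Over.pullback f).IsLeftAdjoint) (X : C) :
    haveI : HasFiniteLimits C := hasFiniteLimits_of_hasTerminal_and_pullbacks
    haveI : CartesianMonoidalCategory (Over X) := CartesianMonoidalCategory.ofHasFiniteProducts
    Nonempty (MonoidalClosed (Over X)) :=
  letI : HasFiniteLimits C := hasFiniteLimits_of_hasTerminal_and_pullbacks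
  letI : CartesianMonoidalCategory (Over X) := .ofHasFiniteProducts
  ⟨Over.monoidalClosedOfIsLeftAdjointPullback fun f => h f⟩
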